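/- Truncated merge preserves reducts: let A = ⟦e₁, nl₁, ol₂, e₂⟧ be a well-formed merged environment with e₂ a simple environment, and let i be a positive number with i ≤ nl₁ − lev(e₁) and i ≤ ol₂. If A rewrites by the reading/merging rules to a simple environment C, then ⟦e₁, nl₁ − i, ol₂ − i, e₂{i}⟧ also rewrites by the reading/merging rules to C, where e₂{i} denotes e₂ with its first i elements removed (and nil if i ≥ len(e₂)). -/
import Mathlib


mutual
inductive STerm : Type
  | const : ℕ → STerm
  | var   : ℕ → STerm
  | app   : STerm → STerm → STerm
  | lam   : STerm → STerm
  | susp  : STerm → ℕ → ℕ → SEnv → STerm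
inductive SEnv : Type
  | nil   : SEnv
  | cons  : STerm → ℕ → SEnv → SEnv
  | merge : SEnv → ℕ → ℕ → SEnv → SEnv
end

/-- Length of an environment. -/
def SEnv.len : SEnv → ℕ
  | .nil => 0
  | .cons _ _ e => 1 + e.len
  | .merge e1 nl1 ol2 _ => e1.len + (ol2 - nl1)

/-- Level of an environment. -/
def SEnv.lev : SEnv → ℕ
  | .nil => 0
  | .cons _ n _ => n
  | .merge _ nl1 ol2 e2 => e2.lev + (nl1 - ol2)

mutual
/-- Well-formedness of suspension terms. -/
def STerm.wf : STerm → Prop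
  | .const _ => True
  | .var _ => True
  | .app t1 t2 => t1.wf ∧ t2.wf
  | .lam t => t.wf
  | .susp t ol nl e => t.wf ∧ e.wf ∧ e.len = ol ∧ e.lev ≤ nl
/-- Well-formedness of suspension environments. -/
def SEnv.wf : SEnv → Prop
  | .nil => True
  | .cons t n e => t.wf ∧ e.wf ∧ e.lev ≤ n
  | .merge e1 nl1 ol2 e2 => e1.wf ∧ e2.wf ∧ e2.len = ol2 ∧ e1.lev ≤ nl1
end

/-- A simple environment: no merged environments on the top spine. -/
def SEnv.simple : SEnv → Prop
  | .nil => True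
  | .cons _ _ e => e.simple
  | .merge _ _ _ _ => False

mutual
/-- One step of the reading rules (r1)-(r6) and merging rules (m1)-(m6),
applied anywhere (compatible closure). -/
inductive StepT : STerm → STerm → Prop
  | r1 : ∀ (c ol nl : ℕ) (e : SEnv), StepT (.susp (.const c) ol nl e) (.const c)
  | r2 : ∀ (i nl : ℕ), StepT (.susp (.var i) 0 nl .nil) (.var (i + nl))
  | r3 : ∀ (ol nl : ℕ) (t : STerm) (l : ℕ) (e : SEnv),
      StepT (.susp (.var 1) ol nl (.cons t l e)) (.susp t 0 (nl - l) .nil)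
  | r4 : ∀ (i ol nl : ℕ) (t : STerm) (l : ℕ) (e : SEnv), 1 < i →
      StepT (.susp (.var i) ol nl (.cons t l e)) (.susp (.var (i - 1)) (ol - 1) nl e)
  | r5 : ∀ (t1 t2 : STerm) (ol nl : ℕ) (e : SEnv),
      StepT (.susp (.app t1 t2) ol nl e) (.app (.susp t1 ol nl e) (.susp t2 ol nl e))
  | r6 : ∀ (t : STerm) (ol nl : ℕ) (e : SEnv),
      StepT (.susp (.lam t) ol nl e)
            (.lam (.susp t (ol + 1) (nl + 1) (.cons (.var 1) (nl + 1) e)))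
  | m1 : ∀ (t : STerm) (ol1 nl1 : ℕ) (e1 : SEnv) (ol2 nl2 : ℕ) (e2 : SEnv),
      StepT (.susp (.susp t ol1 nl1 e1) ol2 nl2 e2)
            (.susp t (ol1 + (ol2 - nl1)) (nl2 + (nl1 - ol2)) (.merge e1 nl1 ol2 e2))
  | appL : ∀ (t1 t1' t2 : STerm), StepT t1 t1' → StepT (.app t1 t2) (.app t1' t2)
  | appR : ∀ (t1 t2 t2' : STerm), StepT t2 t2' → StepT (.app t1 t2) (.app t1 t2')
  | lamC : ∀ (t t' : STerm), StepT t t' → StepT (.lam t) (.lam t')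
  | suspT : ∀ (t t' : STerm) (ol nl : ℕ) (e : SEnv),
      StepT t t' → StepT (.susp t ol nl e) (.susp t' ol nl e)
  | suspE : ∀ (t : STerm) (ol nl : ℕ) (e e' : SEnv),
      StepE e e' → StepT (.susp t ol nl e) (.susp t ol nl e')
inductive StepE : SEnv → SEnv → Prop
  | m2 : ∀ (e1 : SEnv) (nl1 : ℕ), StepE (.merge e1 nl1 0 .nil) e1
  | m3 : ∀ (ol2 : ℕ) (e2 : SEnv), StepE (.merge .nil 0 ol2 e2) e2
  | m4 : ∀ (nl1 ol2 : ℕ) (t : STerm) (l : ℕ) (e2 : SEnv), 1 ≤ nl1 →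
      StepE (.merge .nil nl1 ol2 (.cons t l e2)) (.merge .nil (nl1 - 1) (ol2 - 1) e2)
  | m5 : ∀ (t : STerm) (n : ℕ) (e1 : SEnv) (nl1 ol2 : ℕ) (s : STerm) (l : ℕ) (e2 : SEnv),
      n < nl1 →
      StepE (.merge (.cons t n e1) nl1 ol2 (.cons s l e2))
            (.merge (.cons t n e1) (nl1 - 1) (ol2 - 1) e2)
  | m6 : ∀ (t : STerm) (n : ℕ) (e1 : SEnv) (ol2 : ℕ) (s : STerm) (l : ℕ) (e2 : SEnv),
      StepE (.merge (.cons t n e1) n ol2 (.cons s l e2))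
            (.cons (.susp t ol2 l (.cons s l e2)) (l + (n - ol2))
                   (.merge e1 n ol2 (.cons s l e2)))
  | consT : ∀ (t t' : STerm) (n : ℕ) (e : SEnv),
      StepT t t' → StepE (.cons t n e) (.cons t' n e)
  | consE : ∀ (t : STerm) (n : ℕ) (e e' : SEnv),
      StepE e e' → StepE (.cons t n e) (.cons t n e')
  | mergeL : ∀ (e1 e1' : SEnv) (nl1 ol2 : ℕ) (e2 : SEnv),
      StepE e1 e1' → StepE (.merge e1 nl1 ol2 e2) (.merge e1' nl1 ol2 e2)
  | mergeR : ∀ (e1 : SEnv) (nl1 ol2 : ℕ) (e2 e2' : SEnv),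
      StepE e2 e2' → StepE (.merge e1 nl1 ol2 e2) (.merge e1 nl1 ol2 e2')
end


/-- Truncation of a (simple) environment: remove the first i elements. -/
def SEnv.trunc : SEnv → ℕ → SEnv
  | e, 0 => e
  | .nil, _ + 1 => .nil
  | .cons _ _ e, i + 1 => e.trunc i
  | .merge _ _ _ _, _ + 1 => .nil


/-- Simple environments stay simple under steps, and truncation is (weakly) preserved. -/
theorem simple_step_trunc : ∀ {e e' : SEnv}, StepE e e' → e.simple →
    e'.simple ∧ ∀ i, e.trunc i = e'.trunc i ∨ StepE (e.trunc i) (e'.trunc i)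
  | _, _, .consT t t' n e h, hs =>
    ⟨hs, fun i => match i with
      | 0 => Or.inr (.consT t t' n e h)
      | _+1 => Or.inl rfl⟩
  | _, _, .consE t n e e' h, hs =>
    have ih := simple_step_trunc h hs
    ⟨ih.1, fun i => match i with
      | 0 => Or.inr (.consE t n e e' h)
      | i+1 => ih.2 i⟩
  | _, _, .m2 _ _, hs => hs.elim
  | _, _, .m3 _ _, hs => hs.elim
  | _, _, .m4 _ _ _ _ _ _, hs => hs.elim
  | _, _, .m5 _ _ _ _ _ _ _ _ _, hs => hs.elim
  | _, _, .m6 _ _ _ _ _ _ _, hs => hs.elim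
  | _, _, .mergeL _ _ _ _ _ _, hs => hs.elim
  | _, _, .mergeR _ _ _ _ _ _, hs => hs.elim

mutual
/-- Subject reduction for terms. -/
theorem stepT_wf : ∀ {t t' : STerm}, StepT t t' → t.wf → t'.wf
  | _, _, .r1 _ _ _ _, _ => trivial
  | _, _, .r2 _ _, _ => trivial
  | _, _, .r3 ol nl t l e, hw => by
      simp only [STerm.wf, SEnv.wf] at hw ⊢
      exact ⟨hw.2.1.1, trivial, by simp only [SEnv.len], by simp only [SEnv.lev]; omega⟩
  | _, _, .r4 i ol nl t l e hi, hw => by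
      simp only [STerm.wf, SEnv.wf] at hw ⊢
      have hlen := hw.2.2.1
      have hlev1 := hw.2.1.2.2
      have hlev2 := hw.2.2.2
      simp only [SEnv.len] at hlen
      simp only [SEnv.lev] at hlev2
      exact ⟨trivial, hw.2.1.2.1, by omega, by omega⟩
  | _, _, .r5 t1 t2 ol nl e, hw => by
      simp only [STerm.wf] at hw ⊢
      exact ⟨⟨hw.1.1, hw.2⟩, ⟨hw.1.2, hw.2⟩⟩
  | _, _, .r6 t ol nl e, hw => by
      simp only [STerm.wf, SEnv.wf] at hw ⊢
      have hlen := hw.2.2.1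
      have hlev := hw.2.2.2
      exact ⟨hw.1, ⟨trivial, hw.2.1, by omega⟩, by simp only [SEnv.len]; omega,
        by simp only [SEnv.lev]; omega⟩
  | _, _, .m1 t ol1 nl1 e1 ol2 nl2 e2, hw => by
      simp only [STerm.wf, SEnv.wf] at hw ⊢
      have hl1 := hw.1.2.2.1
      have hv2 := hw.2.2.2
      exact ⟨hw.1.1, ⟨hw.1.2.1, hw.2.1, hw.2.2.1, hw.1.2.2.2⟩,
        by simp only [SEnv.len]; omega, by simp only [SEnv.lev]; omega⟩
  | _, _, .appL t1 t1' t2 h, hw => by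
      simp only [STerm.wf] at hw ⊢
      exact ⟨stepT_wf h hw.1, hw.2⟩
  | _, _, .appR t1 t2 t2' h, hw => by
      simp only [STerm.wf] at hw ⊢
      exact ⟨hw.1, stepT_wf h hw.2⟩
  | _, _, .lamC t t' h, hw => by
      simp only [STerm.wf] at hw ⊢
      exact stepT_wf h hw
  | _, _, .suspT t t' ol nl e h, hw => by
      simp only [STerm.wf] at hw ⊢
      exact ⟨stepT_wf h hw.1, hw.2⟩
  | _, _, .suspE t ol nl e e' h, hw => by
      simp only [STerm.wf] at hw ⊢
      have p := stepE_wf h hw.2.1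
      have a := p.2.1
      have b := hw.2.2.1
      exact ⟨hw.1, p.1, by omega, le_trans p.2.2 hw.2.2.2⟩

/-- Subject reduction for environments, with length preservation and level monotonicity. -/
theorem stepE_wf : ∀ {e e' : SEnv}, StepE e e' → e.wf →
    e'.wf ∧ e'.len = e.len ∧ e'.lev ≤ e.lev
  | _, _, .m2 e1 nl1, hw => by
      simp only [SEnv.wf] at hw
      have h1 := hw.2.2.2
      exact ⟨hw.1, by simp only [SEnv.len]; omega, by simp only [SEnv.lev]; omega⟩
  | _, _, .m3 ol2 e2, hw => by
      simp only [SEnv.wf] at hw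
      have h1 := hw.2.2.1
      exact ⟨hw.2.1, by simp only [SEnv.len]; omega, by simp only [SEnv.lev]; omega⟩
  | _, _, .m4 nl1 ol2 t l e2 h1, hw => by
      simp only [SEnv.wf] at hw ⊢
      have hlen := hw.2.2.1
      simp only [SEnv.len] at hlen
      have hlev := hw.2.1.2.2
      exact ⟨⟨trivial, hw.2.1.2.1, by omega, by simp only [SEnv.lev]; omega⟩,
        by simp only [SEnv.len]; omega, by simp only [SEnv.lev]; omega⟩
  | _, _, .m5 t n e1 nl1 ol2 s l e2 hn, hw => by
      simp only [SEnv.wf] at hw ⊢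
      have hlen := hw.2.2.1
      simp only [SEnv.len] at hlen
      have hlev := hw.2.1.2.2
      exact ⟨⟨hw.1, hw.2.1.2.1, by omega, by simp only [SEnv.lev]; omega⟩,
        by simp only [SEnv.len]; omega, by simp only [SEnv.lev]; omega⟩
  | _, _, .m6 t n e1 ol2 s l e2, hw => by
      simp only [STerm.wf, SEnv.wf] at hw ⊢
      exact ⟨⟨⟨hw.1.1, hw.2.1, hw.2.2.1, by simp only [SEnv.lev]; omega⟩,
        ⟨hw.1.2.1, hw.2.1, hw.2.2.1, hw.1.2.2⟩, by simp only [SEnv.lev]; omega⟩,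
        by simp only [SEnv.len]; omega, by simp only [SEnv.lev]; omega⟩
  | _, _, .consT t t' n e h, hw => by
      simp only [SEnv.wf] at hw ⊢
      exact ⟨⟨stepT_wf h hw.1, hw.2⟩, by simp only [SEnv.len], by simp only [SEnv.lev]; omega⟩
  | _, _, .consE t n e e' h, hw => by
      simp only [SEnv.wf] at hw ⊢
      have p := stepE_wf h hw.2.1
      have a := p.2.1
      exact ⟨⟨hw.1, p.1, le_trans p.2.2 hw.2.2⟩, by simp only [SEnv.len]; omega,
        by simp only [SEnv.lev]; omega⟩
  | _, _, .mergeL e1 e1' nl1 ol2 e2 h, hw => by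
      simp only [SEnv.wf] at hw ⊢
      have p := stepE_wf h hw.1
      have a := p.2.1
      exact ⟨⟨p.1, hw.2.1, hw.2.2.1, le_trans p.2.2 hw.2.2.2⟩,
        by simp only [SEnv.len]; omega, by simp only [SEnv.lev]; omega⟩
  | _, _, .mergeR e1 nl1 ol2 e2 e2' h, hw => by
      simp only [SEnv.wf] at hw ⊢
      have p := stepE_wf h hw.2.1
      have a := p.2.1
      have b := p.2.2
      have c := hw.2.2.1
      exact ⟨⟨hw.1, p.1, by omega, hw.2.2.2⟩, by simp only [SEnv.len],
        by simp only [SEnv.lev]; omega⟩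
end

theorem key : ∀ {A C : SEnv}, Relation.ReflTransGen StepE A C →
    ∀ e1 nl1 ol2 e2 i, A = SEnv.merge e1 nl1 ol2 e2 → A.wf → e2.simple →
      0 < i → i ≤ nl1 - e1.lev → i ≤ ol2 → C.simple →
      Relation.ReflTransGen StepE (SEnv.merge e1 (nl1 - i) (ol2 - i) (e2.trunc i)) C := by
  intro A C h
  induction h using Relation.ReflTransGen.head_induction_on with
  | refl =>
    intro e1 nl1 ol2 e2 i hA hwf hs hip hle1 hle2 hC
    subst hA; exact absurd hC (by simp [SEnv.simple])
  | head hstep htail ih =>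
    intro e1 nl1 ol2 e2 i hA hwf hs hip hle1 hle2 hC
    subst hA
    have hwfD := (stepE_wf hstep hwf).1
    cases hstep with
    | m2 _ _ => omega
    | m3 _ _ => simp only [SEnv.lev] at hle1; omega
    | m4 nl1 ol2 t l e2 hge =>
      simp only [SEnv.lev] at hle1
      obtain ⟨j, rfl⟩ : ∃ j, i = j + 1 := ⟨i - 1, by omega⟩
      show Relation.ReflTransGen StepE
        (SEnv.merge .nil (nl1 - (j+1)) (ol2 - (j+1)) (e2.trunc j)) C
      cases j with
      | zero => simpa only [SEnv.trunc, Nat.zero_add] using htail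
      | succ k =>
        have q1 : nl1 - (k+1+1) = (nl1 - 1) - (k+1) := by omega
        have q2 : ol2 - (k+1+1) = (ol2 - 1) - (k+1) := by omega
        rw [q1, q2]
        exact ih .nil (nl1-1) (ol2-1) e2 (k+1) rfl hwfD hs (by omega)
          (by simp only [SEnv.lev]; omega) (by omega) hC
    | m5 t n e1 nl1 ol2 s l e2 hn =>
      simp only [SEnv.lev] at hle1
      obtain ⟨j, rfl⟩ : ∃ j, i = j + 1 := ⟨i - 1, by omega⟩
      show Relation.ReflTransGen StepE
        (SEnv.merge (.cons t n e1) (nl1 - (j+1)) (ol2 - (j+1)) (e2.trunc j)) C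
      cases j with
      | zero => simpa only [SEnv.trunc, Nat.zero_add] using htail
      | succ k =>
        have q1 : nl1 - (k+1+1) = (nl1 - 1) - (k+1) := by omega
        have q2 : ol2 - (k+1+1) = (ol2 - 1) - (k+1) := by omega
        rw [q1, q2]
        exact ih (.cons t n e1) (nl1-1) (ol2-1) e2 (k+1) rfl hwfD hs (by omega)
          (by simp only [SEnv.lev]; omega) (by omega) hC
    | m6 t n e1 ol2 s l e2 =>
      simp only [SEnv.lev] at hle1; omega
    | mergeL e1 e1' nl1 ol2 e2 hst =>
      simp only [SEnv.wf] at hwf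
      have p := stepE_wf hst hwf.1
      have hl := p.2.2
      exact Relation.ReflTransGen.head
        (StepE.mergeL e1 e1' (nl1 - i) (ol2 - i) (e2.trunc i) hst)
        (ih e1' nl1 ol2 e2 i rfl hwfD hs hip (by omega) hle2 hC)
    | mergeR e1 nl1 ol2 e2 e2' hst =>
      have p := simple_step_trunc hst hs
      have main := ih e1 nl1 ol2 e2' i rfl hwfD p.1 hip hle1 hle2 hC
      rcases p.2 i with hq | hq
      · rw [hq]; exact main
      · exact Relation.ReflTransGen.head
          (StepE.mergeR e1 (nl1 - i) (ol2 - i) _ _ hq) main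

/-- truncated merge preserves reducts. -/
theorem stmt13 (e1 e2 : SEnv) (nl1 ol2 i : ℕ)
    (hwf : (SEnv.merge e1 nl1 ol2 e2).wf) (hs : e2.simple)
    (hipos : 0 < i) (h1 : i ≤ nl1 - e1.lev) (h2 : i ≤ ol2)
    (C : SEnv) (hC : C.simple)
    (h : Relation.ReflTransGen StepE (SEnv.merge e1 nl1 ol2 e2) C) :
    Relation.ReflTransGen StepE (SEnv.merge e1 (nl1 - i) (ol2 - i) (e2.trunc i)) C := by
  exact key h e1 nl1 ol2 e2 i rfl hwf hs hipos h1 h2 hC
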